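/- Let X₊ be the union of k pairwise disjoint d-simplices in ℝᵈ, each having positive distance from a closed set X₋. Then there exists a three-layer ReLU network with first hidden width at most k(d+1) and second hidden width k that is strictly positive on X₊ and strictly negative on X₋. -/

import Mathlib

/-!
For an affine basis `b` of `ℝᵈ`, the sum `g_b` of the negative parts of the barycentric
coordinates is a sum of `d + 1` ReLUs of affine functions. It vanishes exactly on the simplex
spanned by `b`, and its sublevel sets are compact because `∑ |coordᵢ| = 1 + 2 g_b`; hence
`g_b ≥ c > 0` outside the `ε`-neighbourhood of the simplex, and the second-layer unit
`ReLU (1 - (2 / c) g_b)` is `1` on the simplex and `0` outside that neighbourhood. Summing one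
such unit per simplex and subtracting `1 / 2` separates `X₊` from `X₋`.
-/

open Set Metric

lemma exists_pos_forall_le_of_isCompact_setOf_le_one {X : Type*} [TopologicalSpace X]
    {g : X → ℝ} (hg : Continuous g) (hcpt : IsCompact {x | g x ≤ 1}) {s : Set X}
    (hs : IsClosed s) (hpos : ∀ x ∈ s, 0 < g x) : ∃ c > 0, ∀ x ∈ s, c ≤ g x := by
  obtain ⟨c, hc, hle⟩ :=
    (hcpt.inter_left hs).exists_forall_le' hg.continuousOn fun x hx => hpos x hx.1
  refine ⟨min c 1, lt_min hc one_pos, fun x hx => ?_⟩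
  by_cases hx₁ : g x ≤ 1
  · exact (min_le_left _ _).trans (hle x ⟨hx, hx₁⟩)
  · exact (min_le_right _ _).trans (le_of_not_ge hx₁)

namespace AffineBasis

variable {ι E : Type*} [Fintype ι] [NormedAddCommGroup E] [NormedSpace ℝ E]
  (b : AffineBasis ι ℝ E)

noncomputable def sumNegPartCoord (x : E) : ℝ := ∑ i, (b.coord i x)⁻

lemma sumNegPartCoord_nonneg (x : E) : 0 ≤ b.sumNegPartCoord x :=
  Finset.sum_nonneg fun _ _ => negPart_nonneg _

lemma sumNegPartCoord_eq_zero_iff {x : E} :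
    b.sumNegPartCoord x = 0 ↔ x ∈ convexHull ℝ (range b) := by
  simp [sumNegPartCoord, Finset.sum_eq_zero_iff_of_nonneg, b.convexHull_eq_nonneg_coord]

lemma sum_abs_coord (x : E) : ∑ i, |b.coord i x| = 1 + 2 * b.sumNegPartCoord x := by
  have habs : ∀ i, |b.coord i x| = b.coord i x + 2 * (b.coord i x)⁻ := fun i => by
    linarith [two_nsmul (b.coord i x)⁻ ▸ abs_sub_eq_two_nsmul_negPart (b.coord i x)]
  rw [sumNegPartCoord, Finset.mul_sum, ← b.sum_coord_apply_eq_one x, ← Finset.sum_add_distrib]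
  exact Finset.sum_congr rfl fun i _ => habs i

variable [FiniteDimensional ℝ E]

lemma continuous_sumNegPartCoord : Continuous b.sumNegPartCoord :=
  continuous_finsetSum _ fun i _ =>
    (b.coord i).continuous_of_finiteDimensional.neg.max continuous_const

lemma isCompact_setOf_sumNegPartCoord_le (r : ℝ) : IsCompact {x | b.sumNegPartCoord x ≤ r} := by
  refine isCompact_of_isClosed_isBounded
    (isClosed_le b.continuous_sumNegPartCoord continuous_const) ?_
  refine isBounded_iff_forall_norm_le.2 ⟨∑ i, (1 + 2 * r) * ‖b i‖, fun x hx => ?_⟩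
  have hcoord : ∀ i, |b.coord i x| ≤ 1 + 2 * r := fun i => calc
    |b.coord i x| ≤ ∑ j, |b.coord j x| :=
      Finset.single_le_sum (fun j _ => abs_nonneg (b.coord j x)) (Finset.mem_univ i)
    _ ≤ 1 + 2 * r := by rw [sum_abs_coord]; linarith [mem_ofPred.1 hx]
  calc ‖x‖ = ‖∑ i, b.coord i x • b i‖ := by rw [b.linear_combination_coord_eq_self]
    _ ≤ ∑ i, |b.coord i x| * ‖b i‖ := norm_sum_le_of_le _ fun i _ => (norm_smul _ _).le
    _ ≤ ∑ i, (1 + 2 * r) * ‖b i‖ := by gcongr with i; exact hcoord i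

lemma exists_pos_le_sumNegPartCoord_of_notMem_thickening {ε : ℝ} (hε : 0 < ε) :
    ∃ c > 0, ∀ x ∉ thickening ε (convexHull ℝ (range b)), c ≤ b.sumNegPartCoord x :=
  exists_pos_forall_le_of_isCompact_setOf_le_one b.continuous_sumNegPartCoord
    (b.isCompact_setOf_sumNegPartCoord_le 1) isOpen_thickening.isClosed_compl fun x hx =>
      (b.sumNegPartCoord_nonneg x).lt_of_ne fun h =>
        hx (self_subset_thickening hε _ (b.sumNegPartCoord_eq_zero_iff.1 h.symm))

end AffineBasis

lemma AffineMap.exists_inner_add_eq {E : Type*} [NormedAddCommGroup E] [InnerProductSpace ℝ E]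
    [FiniteDimensional ℝ E] (f : E →ᵃ[ℝ] ℝ) : ∃ (w : E) (β : ℝ), ∀ x, f x = inner ℝ w x + β :=
  ⟨(InnerProductSpace.toDual ℝ E).symm (LinearMap.toContinuousLinearMap f.linear), f 0,
    fun x => by rw [InnerProductSpace.toDual_symm_apply]; exact congrFun f.decomp x⟩

lemma exists_blockDiagonal_twoLayer {E : Type*} [Inner ℝ E] {k m : ℕ} (w : Fin k → Fin m → E)
    (β : Fin k → Fin m → ℝ) (a : Fin k → ℝ) :
    ∃ (W₁ : Fin (k * m) → E) (b₁ : Fin (k * m) → ℝ) (W₂ : Fin k → Fin (k * m) → ℝ),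
      ∀ j x, ∑ l, W₂ j l * max (inner ℝ (W₁ l) x + b₁ l) 0 =
        a j * ∑ i, max (inner ℝ (w j i) x + β j i) 0 := by
  refine ⟨fun l => w (finProdFinEquiv.symm l).1 (finProdFinEquiv.symm l).2,
    fun l => β (finProdFinEquiv.symm l).1 (finProdFinEquiv.symm l).2,
    fun j l => if (finProdFinEquiv.symm l).1 = j then a j else 0, fun j x => ?_⟩
  rw [← finProdFinEquiv.sum_comp, Fintype.sum_prod_type]
  simp [Finset.mul_sum]

theorem three_layer_network_for_union_of_simplices_general
    (d k : ℕ)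
    (pts : Fin k → Fin (d + 1) → EuclideanSpace ℝ (Fin d))
    (hpts : ∀ i, AffineIndependent ℝ (pts i))
    (S : Fin k → Set (EuclideanSpace ℝ (Fin d)))
    (hS : ∀ i, S i = convexHull ℝ (Set.range (pts i)))
    (Xp Xm : Set (EuclideanSpace ℝ (Fin d)))
    (hXp : Xp = ⋃ i, S i)
    (ε : ℝ) (hε : 0 < ε)
    (hsep : ∀ i, ∀ x ∈ Xm, ∀ y ∈ S i, ε ≤ dist x y) :
    ∃ (N : EuclideanSpace ℝ (Fin d) → ℝ)
      (W₁ : Fin (k * (d + 1)) → EuclideanSpace ℝ (Fin d)) (b₁ : Fin (k * (d + 1)) → ℝ)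
      (W₂ : Fin k → Fin (k * (d + 1)) → ℝ) (b₂ : Fin k → ℝ)
      (a : Fin k → ℝ) (c : ℝ),
      (∀ x, N x = c + ∑ j, a j *
        max (b₂ j + ∑ l, W₂ j l * max ((inner ℝ (W₁ l) x : ℝ) + b₁ l) 0) 0) ∧
      (∀ x ∈ Xp, 0 < N x) ∧ (∀ x ∈ Xm, N x < 0) := by
  let b i : AffineBasis (Fin (d + 1)) ℝ (EuclideanSpace ℝ (Fin d)) :=
    ⟨pts i, hpts i, (hpts i).affineSpan_eq_top_iff_card_eq_finrank_add_one.mpr (by simp)⟩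
  choose c hc hc_le using fun i => (b i).exists_pos_le_sumNegPartCoord_of_notMem_thickening hε
  choose w β hwβ using fun i j => (-(b i).coord j).exists_inner_add_eq
  obtain ⟨W₁, b₁, W₂, hW⟩ := exists_blockDiagonal_twoLayer w β fun i => -(2 / c i)
  have hlayer i x : ∑ l, W₂ i l * max (inner ℝ (W₁ l) x + b₁ l) 0 =
      -(2 / c i) * (b i).sumNegPartCoord x := by
    simp only [hW, ← hwβ]; rfl
  refine ⟨_, W₁, b₁, W₂, fun _ => 1, fun _ => 1, -(1 / 2), fun x => rfl, ?_, ?_⟩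
  · intro x hx
    obtain ⟨i, hi⟩ := mem_iUnion.1 (hXp ▸ hx)
    have hzero : (b i).sumNegPartCoord x = 0 := (b i).sumNegPartCoord_eq_zero_iff.2 (hS i ▸ hi)
    have hone : 1 ≤ ∑ j, 1 * max (1 + ∑ l, W₂ j l * max (inner ℝ (W₁ l) x + b₁ l) 0) 0 := by
      refine le_of_eq_of_le ?_ (Finset.single_le_sum (fun j _ => ?_) (Finset.mem_univ i))
      · simp [hlayer, hzero]
      · positivity
    linarith
  · intro x hx
    have hunit i : max (1 + ∑ l, W₂ i l * max (inner ℝ (W₁ l) x + b₁ l) 0) 0 = 0 := by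
      have hfar : x ∉ thickening ε (convexHull ℝ (range (b i))) := fun h => by
        obtain ⟨y, hy, hxy⟩ := mem_thickening_iff.1 h
        exact (hsep i x hx y (hS i ▸ hy)).not_gt hxy
      have htwo : 2 ≤ 2 / c i * (b i).sumNegPartCoord x := by
        rw [div_mul_eq_mul_div, le_div_iff₀ (hc i)]
        linarith [hc_le i x hfar]
      rw [hlayer, max_eq_right]
      linarith
    simp [hunit]

/-- If `X₊` is a union of `k` pairwise disjoint `d`-simplices in `ℝ^d`, each at
positive distance from a closed set `X₋`, then there is a three-layer ReLU network
with first hidden width `k·(d+1)` and second hidden width `k` that is strictly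
positive on `X₊` and strictly negative on `X₋`. -/
theorem three_layer_network_for_union_of_simplices
    (d k : ℕ)
    (pts : Fin k → Fin (d + 1) → EuclideanSpace ℝ (Fin d))
    (hpts : ∀ i, AffineIndependent ℝ (pts i))
    (S : Fin k → Set (EuclideanSpace ℝ (Fin d)))
    (hS : ∀ i, S i = convexHull ℝ (Set.range (pts i)))
    (hSdisj : Pairwise fun i j => Disjoint (S i) (S j))
    (Xp Xm : Set (EuclideanSpace ℝ (Fin d)))
    (hXp : Xp = ⋃ i, S i)
    (hXm : IsClosed Xm)
    (ε : ℝ) (hε : 0 < ε)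
    (hsep : ∀ i, ∀ x ∈ Xm, ∀ y ∈ S i, ε ≤ dist x y) :
    ∃ (N : EuclideanSpace ℝ (Fin d) → ℝ)
      (W₁ : Fin (k * (d + 1)) → EuclideanSpace ℝ (Fin d)) (b₁ : Fin (k * (d + 1)) → ℝ)
      (W₂ : Fin k → Fin (k * (d + 1)) → ℝ) (b₂ : Fin k → ℝ)
      (a : Fin k → ℝ) (c : ℝ),
      (∀ x, N x = c + ∑ j, a j *
        max (b₂ j + ∑ l, W₂ j l * max ((inner ℝ (W₁ l) x : ℝ) + b₁ l) 0) 0) ∧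
      (∀ x ∈ Xp, 0 < N x) ∧ (∀ x ∈ Xm, N x < 0) :=
  three_layer_network_for_union_of_simplices_general d k pts hpts S hS Xp Xm hXp ε hε hsep
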